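/- arXiv:2002.01309 — 5 statements merged into one kernel-verified Lean document; each statement's English description precedes it below -/
import Mathlib

section
/- In a commutative semigroup (S,+), every piecewise syndetic subset A of S is a J-set: for every finite set F of sequences f : ℕ → S, there exist a ∈ S and a finite nonempty set H ⊆ ℕ such that for every f ∈ F, a + ∑_{t ∈ H} f(t) ∈ A. -/
/-- Fold of addition along a list, starting from `a` (no identity needed). -/
def addChain {S : Type*} [Add S] : S → List S → S
  | a, [] => a
  | a, b :: l => addChain (a + b) l

/-- The sum `∑ t ∈ H, f t` in an additive commutative semigroup (junk value `f 0`
for `H = ∅`; we only use it for nonempty `H`). -/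
def finSum {S : Type*} [AddCommSemigroup S] (f : ℕ → S) (H : Finset ℕ) : S :=
  match H.sort (· ≤ ·) with
  | [] => f 0
  | a :: l => addChain (f a) (l.map f)

def AddThick {S : Type*} [AddCommSemigroup S] (A : Set S) : Prop :=
  ∀ E : Finset S, E.Nonempty → ∃ x : S, ∀ e ∈ E, e + x ∈ A

def AddPiecewiseSyndetic {S : Type*} [AddCommSemigroup S] (A : Set S) : Prop :=
  ∃ F : Finset S, F.Nonempty ∧ AddThick {s : S | ∃ t ∈ F, t + s ∈ A}

def AddJSet {S : Type*} [AddCommSemigroup S] (A : Set S) : Prop :=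
  ∀ F : Finset (ℕ → S), F.Nonempty →
    ∃ a : S, ∃ H : Finset ℕ, H.Nonempty ∧ ∀ f ∈ F, a + finSum f H ∈ A

/-! Let `G` be a finite set with `⋃_{t ∈ G} (-t + A)` thick, and let `ι` be a finite dimension
given by the Hales–Jewett theorem for the alphabet `F` and the colours `G`, embedded into `ℕ`
by `n`. For a word `w : ι → F` put `d w = ∑ᵢ wᵢ (n i)`. Thickness gives one `x` with
`d w + x ∈ ⋃_{t ∈ G} (-t + A)` for all words; colouring `w` by such a `t` yields a monochromatic
line of colour `c`. Along the line, `d` is the sum of `f` over `H = n '' {active coordinates}`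
plus a constant `m` coming from the fixed coordinates, so `a = c + x + m` works. Since `S` need
not have an identity and `m` may be an empty sum, sums are computed in `WithZero S`. -/

section
variable {S : Type*} [AddCommSemigroup S]

lemma coe_addChain (a : S) (l : List S) :
    ((addChain a l : S) : WithZero S) = a + (l.map (↑· : S → WithZero S)).sum := by
  induction l generalizing a with
  | nil => simp [addChain]
  | cons b l ih => simp [addChain, ih, add_assoc]

lemma coe_finSum (f : ℕ → S) {H : Finset ℕ} (hH : H.Nonempty) :
    ((finSum f H : S) : WithZero S) = ∑ t ∈ H, (f t : WithZero S) := by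
  rw [Finset.sum_eq_multiset_sum, ← H.sort_eq (· ≤ ·), Multiset.map_coe, Multiset.sum_coe,
    finSum]
  split
  · next h => simpa [← H.length_sort (· ≤ ·), h] using hH.card_pos
  · next a l h => simp [h, coe_addChain, Function.comp_def]

lemma exists_coe_eq_coe_add (u : S) (m : WithZero S) : ∃ s : S, (s : WithZero S) = u + m := by
  induction m using WithZero.recZeroCoe with
  | zero => exact ⟨u, (add_zero _).symm⟩
  | coe v => exact ⟨u + v, WithZero.coe_add u v⟩

lemma exists_coe_eq_sum {ι : Type*} {s : Finset ι} (hs : s.Nonempty) (g : ι → S) :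
    ∃ x : S, (x : WithZero S) = ∑ i ∈ s, (g i : WithZero S) := by
  classical
  obtain ⟨i, hi⟩ := hs
  rw [← s.add_sum_erase _ hi]
  exact exists_coe_eq_coe_add _ _

lemma coe_finSum_image {ι : Type*} [DecidableEq ι] (f : ℕ → S) {n : ι → ℕ}
    (hn : Function.Injective n) {s : Finset ι} (hs : s.Nonempty) :
    ((finSum f (s.image n) : S) : WithZero S) = ∑ i ∈ s, (f (n i) : WithZero S) := by
  rw [coe_finSum f (hs.image n), Finset.sum_image hn.injOn]

lemma AddThick.exists_forall_add_mem {A : Set S} (hA : AddThick A) {W : Type*} [Finite W]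
    [Nonempty W] (d : W → S) : ∃ x, ∀ w, d w + x ∈ A := by
  classical
  have := Fintype.ofFinite W
  obtain ⟨x, hx⟩ := hA (Finset.univ.image d) (Finset.univ_nonempty.image d)
  exact ⟨x, fun w => hx _ (Finset.mem_image_of_mem d (Finset.mem_univ w))⟩

end

namespace Combinatorics.Line

lemma exists_sum_apply_eq_sum_add {α ι M : Type*} [DecidableEq α] [Fintype ι] [AddCommMonoid M]
    (l : Line α ι) (g : ι → α → M) :
    ∃ m : M, ∀ x, ∑ i, g i (l x i) = ∑ i with l.idxFun i = none, g i x + m := by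
  refine ⟨∑ i with l.idxFun i ≠ none, (l.idxFun i).elim 0 (g i), fun x => ?_⟩
  rw [← Finset.sum_filter_add_sum_filter_not _ (l.idxFun · = none)]
  congr 1
  · refine Finset.sum_congr rfl fun i hi => ?_
    rw [l.apply_none _ _ (Finset.mem_filter.1 hi).2]
  · refine Finset.sum_congr rfl fun i hi => ?_
    obtain ⟨a, ha⟩ := Option.ne_none_iff_exists'.1 (Finset.mem_filter.1 hi).2
    rw [apply_some ha, ha, Option.elim_some]

end Combinatorics.Line

theorem piecewiseSyndetic_isJSet {S : Type*} [AddCommSemigroup S] (A : Set S)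
    (hA : AddPiecewiseSyndetic A) : AddJSet A := by
  classical
  obtain ⟨G, hG, hthick⟩ := hA
  intro F hF
  have := hF.to_subtype
  have := hG.to_subtype
  obtain ⟨ι, _, hHJ⟩ := Combinatorics.Line.exists_mono_in_high_dimension F G
  have : Nonempty ι := ⟨(hHJ fun _ => Classical.arbitrary G).choose.proper.choose⟩
  obtain ⟨n, hn⟩ := Countable.exists_injective_nat ι
  choose d hd using fun w : ι → F ↦
    exists_coe_eq_sum Finset.univ_nonempty fun i ↦ (w i).1 (n i)
  obtain ⟨x, hx⟩ := hthick.exists_forall_add_mem d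
  choose C hCG hCA using hx
  obtain ⟨l, c, hc⟩ := hHJ fun w => ⟨C w, hCG w⟩
  obtain ⟨m, hm⟩ := l.exists_sum_apply_eq_sum_add fun i f => (f.1 (n i) : WithZero S)
  obtain ⟨a, ha⟩ := exists_coe_eq_coe_add (c.1 + x) m
  set V : Finset ι := {i | l.idxFun i = none}
  have hV : V.Nonempty :=
    let ⟨i, hi⟩ := l.proper; ⟨i, Finset.mem_filter.2 ⟨Finset.mem_univ i, hi⟩⟩
  refine ⟨a, V.image n, hV.image n, fun f hf => ?_⟩
  have hcolor : C (l ⟨f, hf⟩) = c := congrArg Subtype.val (hc ⟨f, hf⟩)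
  have hsplit : a + finSum f (V.image n) = C (l ⟨f, hf⟩) + (d (l ⟨f, hf⟩) + x) := by
    apply WithZero.coe_injective
    simp only [WithZero.coe_add]
    rw [ha, hd, hm, coe_finSum_image f hn hV, hcolor, WithZero.coe_add]
    abel
  rw [hsplit]
  exact hCA _
end

section
/- The image coloring argument for Hales-Jewett: let (S,+) be a commutative semigroup, let f_1,…,f_n : ℕ → S be sequences, and let A ⊆ S be such that there exist b ∈ S, a finite set E = {t_1,…,t_r} ⊆ S with b + ∑_{i=1}^N f_{a_i}(i) ∈ ⋃_{j=1}^r (-t_j + A) for all (a_1,…,a_N) ∈ [n]^N, where N is at least the Hales-Jewett number HJ(r,n). Then there exist s ∈ S and a finite nonempty H ⊆ {1,…,N} such that s + ∑_{t∈H} f_i(t) ∈ A for all i ∈ {1,…,n}. -/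
/-! Colour `a ∈ [n]^N` by an index `j` with `t_j + b + ∑ᵢ f_{aᵢ}(i) ∈ A` and take a
monochromatic line. Along the line the sum is a constant, coming from `b` and the fixed
coordinates, plus `∑_{t ∈ H} f_x(t)` over the set `H` of moving coordinates, so
`s = t_c + (that constant)` works for the common colour `c`. The sums are computed in
`WithZero S`, where the contribution of the fixed coordinates may be empty. -/

open Combinatorics Finset

namespace WithZero

variable {S : Type*}

lemma coe_addChain [AddSemigroup S] (a : S) (l : List S) :
    ((addChain a l : S) : WithZero S) = a + (l.map (↑)).sum := by
  induction l generalizing a with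
  | nil => simp [addChain]
  | cons x xs ih => rw [addChain, ih, coe_add, List.map_cons, List.sum_cons, add_assoc]

lemma coe_finSum [AddCommSemigroup S] (f : ℕ → S) {H : Finset ℕ} (hH : H.Nonempty) :
    ((finSum f H : S) : WithZero S) = ∑ t ∈ H, (f t : WithZero S) := by
  have hsum : ∑ t ∈ H, (f t : WithZero S)
      = ((H.sort (· ≤ ·)).map fun t => (f t : WithZero S)).sum := by
    rw [Finset.sum, ← Finset.sort_eq H (· ≤ ·), Multiset.map_coe, Multiset.sum_coe]
  rw [hsum, finSum]
  rcases h : H.sort (· ≤ ·) with _ | ⟨a, l⟩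
  · have := length_sort (· ≤ ·) (s := H)
    simp only [h, List.length_nil] at this
    exact absurd this.symm hH.card_pos.ne'
  · simp [coe_addChain, Function.comp_def]

lemma exists_coe_eq_coe_add [Add S] (a : S) (m : WithZero S) :
    ∃ s : S, (s : WithZero S) = a + m := by
  induction m with
  | zero => exact ⟨a, (add_zero _).symm⟩
  | coe m => exact ⟨a + m, coe_add a m⟩

end WithZero

namespace Combinatorics.Line

variable {α : Type*}

lemma sum_apply {ι M : Type*} [Fintype ι] [AddCommMonoid M] (l : Line α ι) (g : ι → α → M)
    (x : α) :
    ∑ i, g i (l x i) = ∑ i with l.idxFun i = none, g i x + ∑ i, (l.idxFun i).elim 0 (g i) := by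
  rw [sum_filter, ← sum_add_distrib]
  refine sum_congr rfl fun i _ => ?_
  cases h : l.idxFun i <;> simp [h]

def activeCoords {N : ℕ} (l : Line α (Fin N)) : Finset ℕ :=
  ({i | l.idxFun i = none} : Finset (Fin N)).map (Fin.valEmbedding.trans (addRightEmbedding 1))

variable {N : ℕ} (l : Line α (Fin N))

lemma activeCoords_nonempty : l.activeCoords.Nonempty := by
  obtain ⟨i, hi⟩ := l.proper
  exact ⟨i + 1, mem_map_of_mem _ (by simpa using hi)⟩

lemma activeCoords_subset_Icc : l.activeCoords ⊆ Icc 1 N := by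
  intro t ht
  obtain ⟨i, -, rfl⟩ := mem_map.1 ht
  simp only [Function.Embedding.trans_apply, Fin.valEmbedding_apply, addRightEmbedding_apply,
    mem_Icc]
  omega

lemma exists_addChain_ofFn_eq_add_finSum {S : Type*} [AddCommSemigroup S] (b : S)
    (g : α → ℕ → S) :
    ∃ s : S, ∀ x, addChain b (List.ofFn fun i : Fin N => g (l x i) (i + 1))
      = s + finSum (g x) l.activeCoords := by
  obtain ⟨s, hs⟩ := WithZero.exists_coe_eq_coe_add b
    (∑ i, (l.idxFun i).elim 0 fun a => (g a (i + 1) : WithZero S))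
  refine ⟨s, fun x => WithZero.coe_injective ?_⟩
  rw [WithZero.coe_addChain, List.map_ofFn, List.sum_ofFn, WithZero.coe_add, hs,
    WithZero.coe_finSum _ l.activeCoords_nonempty, activeCoords, sum_map]
  simp only [Function.comp_apply, Function.Embedding.trans_apply, Fin.valEmbedding_apply,
    addRightEmbedding_apply]
  rw [sum_apply l (fun i a => (g a (i + 1) : WithZero S))]
  abel

end Combinatorics.Line

/-- The image coloring argument for Hales–Jewett. `f : Fin n → ℕ → S` are the sequences,
`b ∈ S`, `E : Fin r → S` enumerates the finite set `{t_1,…,t_r}`, and `N` is at least the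
Hales–Jewett number `HJ(r,n)`, expressed by saying that every `r`-coloring of `[n]^N`
admits a monochromatic combinatorial line. -/
theorem image_coloring_halesJewett {S : Type*} [AddCommSemigroup S]
    (n N r : ℕ) (f : Fin n → ℕ → S) (A : Set S) (b : S) (E : Fin r → S)
    (hN : ∀ χ : (Fin N → Fin n) → Fin r,
      ∃ l : Combinatorics.Line (Fin n) (Fin N), ∃ c : Fin r, ∀ x : Fin n, χ (l x) = c)
    (hb : ∀ a : Fin N → Fin n, ∃ j : Fin r,
      E j + addChain b (List.ofFn fun i : Fin N => f (a i) (i.val + 1)) ∈ A) :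
    ∃ s : S, ∃ H : Finset ℕ, H.Nonempty ∧ H ⊆ Finset.Icc 1 N ∧
      ∀ i : Fin n, s + finSum (f i) H ∈ A := by
  choose χ hχ using hb
  obtain ⟨l, c, hc⟩ := hN χ
  obtain ⟨s, hs⟩ := l.exists_addChain_ofFn_eq_add_finSum b f
  refine ⟨E c + s, l.activeCoords, l.activeCoords_nonempty, l.activeCoords_subset_Icc,
    fun x => ?_⟩
  rw [add_assoc, ← hs x, ← hc x]
  exact hχ (l x)
end

section
/- Furstenberg's Central Sets Theorem for ℕ (finitely many sequences): let A be a central subset of ℕ, let k ∈ ℕ, and for each i ∈ {1,…,k} let ⟨y_{i,n}⟩ be a sequence in ℤ. Then there exist a sequence ⟨a_n⟩ in ℕ and a sequence ⟨H_n⟩ of finite nonempty subsets of ℕ with max H_n < min H_{n+1} for each n, such that for each i ∈ {1,…,k} and each finite nonempty F ⊆ ℕ, ∑_{n∈F} (a_n + ∑_{t∈H_n} y_{i,t}) ∈ A. -/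
/-- A subset of ℕ is thick iff it contains arbitrarily long intervals. -/
def NatThick (A : Set ℕ) : Prop := ∀ L : ℕ, ∃ a : ℕ, ∀ j ≤ L, a + j ∈ A

/-- A subset of ℕ is piecewise syndetic iff `⋃_{i=1}^r (A - i)` is thick for some `r`. -/
def NatPiecewiseSyndetic (A : Set ℕ) : Prop :=
  ∃ r : ℕ, 0 < r ∧ NatThick {s : ℕ | ∃ i ∈ Finset.Icc 1 r, s + i ∈ A}

/-- Combinatorial characterization of central subsets of ℕ. -/
def NatCentral (A : Set ℕ) : Prop :=
  ∃ C : ℕ → Set ℕ, (∀ n, C n ⊆ A) ∧ (∀ n, C (n + 1) ⊆ C n) ∧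
    (∀ n, NatPiecewiseSyndetic (C n)) ∧
    (∀ n, ∀ x ∈ C n, ∃ m, C m ⊆ {s : ℕ | x + s ∈ C n})

/-!
The combinatorial input is the Hales–Jewett theorem. Colour a word `w : ι → α` by a shift
`d ∈ [1, r]` putting `b + ∑ j, g (w j) j` into the piecewise syndetic set `D`, where `b`
translates the finitely many values of these sums into the thick set `⋃ d ≤ r, (D - d)`.
Along a monochromatic line the sum is affine in the moving letter, which yields `c` and a
nonempty `W` with `c + ∑ j ∈ W, g x j ∈ D` for all letters `x`; with the letters `Option κ`,
`none` contributing `0`, this gives `a ∈ ℕ` and a block `H` with `a + ∑ t ∈ H, y i t ∈ D` for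
all `i` at once.

The sequences are then built term by term. Once every finite sum of the first `n` terms lies in
`C 0`, the shift property, applied to these finitely many sums, gives one `m` with
`x + C m ⊆ C 0` for all of them, and the next term is taken from `C m`, to the right of the
previous block.
-/

open Filter Function

theorem NatThick.exists_add_mem_of_finite {A : Set ℕ} (hA : NatThick A) {S : Set ℤ}
    (hS : S.Finite) : ∃ b : ℤ, ∀ z ∈ S, b + z ∈ (Nat.cast '' A : Set ℤ) := by
  obtain ⟨M, hM⟩ := (hS.image Int.natAbs).bddAbove
  obtain ⟨a, ha⟩ := hA (2 * M)
  refine ⟨a + M, fun z hz => ⟨a + (z + M).toNat, ha _ ?_, ?_⟩⟩ <;>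
    have := hM ⟨z, hz, rfl⟩ <;> omega

theorem NatPiecewiseSyndetic.exists_add_mem_of_finite {D : Set ℕ} (hD : NatPiecewiseSyndetic D) :
    ∃ r : ℕ, ∀ S : Set ℤ, S.Finite →
      ∃ b : ℤ, ∀ z ∈ S, ∃ d ∈ Finset.Icc 1 r, b + z + d ∈ (Nat.cast '' D : Set ℤ) := by
  obtain ⟨r, -, hr⟩ := hD
  refine ⟨r, fun S hS => ?_⟩
  obtain ⟨b, hb⟩ := hr.exists_add_mem_of_finite hS
  refine ⟨b, fun z hz => ?_⟩
  obtain ⟨u, ⟨d, hd, hud⟩, hu⟩ := hb z hz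
  exact ⟨d, hd, u + d, hud, by rw [← hu]; push_cast; ring⟩

theorem Combinatorics.Line.exists_sum_apply_eq {α ι M : Type*} [Fintype ι] [AddCommMonoid M]
    (l : Combinatorics.Line α ι) (g : α → ι → M) :
    ∃ c : M, ∀ x, ∑ j, g (l x j) j = c + ∑ j with l.idxFun j = none, g x j := by
  classical
  refine ⟨∑ j, (l.idxFun j).elim 0 (g · j), fun x => ?_⟩
  rw [Finset.sum_filter, ← Finset.sum_add_distrib]
  refine Finset.sum_congr rfl fun j _ => ?_
  cases h : l.idxFun j <;> simp [h]

theorem Antitone.exists_forall_add_mem_of_finite {C : ℕ → Set ℕ} (hC : Antitone C) {B : Set ℕ}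
    (hB : ∀ x ∈ B, ∃ m, C m ⊆ {s | x + s ∈ B}) {T : Set ℕ} (hT : T.Finite) (hTB : T ⊆ B) :
    ∃ m, ∀ s ∈ C m, ∀ x ∈ T, x + s ∈ B := by
  have hbasis := hasBasis_iInf_principal hC.directed_ge
  have : ∀ᶠ s in ⨅ m, 𝓟 (C m), ∀ x ∈ T, x + s ∈ B :=
    (eventually_all_finite hT).2 fun x hx =>
      hbasis.eventually_iff.2 (by simpa [Set.subset_def] using hB x (hTB hx))
  simpa using hbasis.eventually_iff.1 this

theorem exists_forall_of_exists_update {β : Type*} (P : ℕ → (ℕ → β) → Prop)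
    (hP : ∀ n f g, (∀ j < n, f j = g j) → P n f → P n g) (f₀ : ℕ → β) (h₀ : P 0 f₀)
    (hstep : ∀ n f, P n f → ∃ b, P (n + 1) (update f n b)) : ∃ f, ∀ n, P n f := by
  have : Nonempty β := ⟨f₀ 0⟩
  choose! next hnext using hstep
  let s : ℕ → ℕ → β := fun n => Nat.rec f₀ (fun n f => update f n (next n f)) n
  have hs : ∀ n, P n (s n) := fun n => Nat.rec h₀ (fun n ih => hnext n _ ih) n
  have hagree : ∀ n, ∀ j < n, s n j = s (j + 1) j := by
    intro n j hj
    induction n with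
    | zero => omega
    | succ n ih =>
      rcases Nat.lt_succ_iff_lt_or_eq.1 hj with hj | rfl
      · exact (update_of_ne hj.ne _ _).trans (ih hj)
      · rfl
  exact ⟨fun j => s (j + 1) j, fun n => hP n _ _ (hagree n) (hs n)⟩

theorem NatPiecewiseSyndetic.exists_add_sum_mem {D : Set ℕ} (hD : NatPiecewiseSyndetic D)
    (α : Type*) [Finite α] :
    ∃ (ι : Type) (_ : Fintype ι), ∀ g : α → ι → ℤ, ∃ (c : ℤ) (W : Finset ι), W.Nonempty ∧
      ∀ x, c + ∑ j ∈ W, g x j ∈ (Nat.cast '' D : Set ℤ) := by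
  classical
  obtain ⟨r, hr⟩ := hD.exists_add_mem_of_finite
  obtain ⟨ι, _, hHJ⟩ := Combinatorics.Line.exists_mono_in_high_dimension α (Finset.Icc 1 r)
  refine ⟨ι, inferInstance, fun g => ?_⟩
  let f : (ι → α) → ℤ := fun w => ∑ j, g (w j) j
  obtain ⟨b, hb⟩ := hr (Set.range f) (Set.finite_range f)
  choose d hd hmem using fun w => hb (f w) ⟨w, rfl⟩
  obtain ⟨l, c, hc⟩ := hHJ fun w => ⟨d w, hd w⟩
  obtain ⟨e, he⟩ := l.exists_sum_apply_eq g
  refine ⟨b + e + c, ({j | l.idxFun j = none} : Finset ι),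
    l.proper.imp fun j hj => by simpa using hj, fun x => ?_⟩
  have hx := hmem (l x)
  rw [show f (l x) = _ from he x, show d (l x) = c from congrArg Subtype.val (hc x)] at hx
  convert hx using 1
  ring

theorem NatPiecewiseSyndetic.exists_nat_add_sum_mem {D : Set ℕ} (hD : NatPiecewiseSyndetic D)
    {κ : Type*} [Finite κ] (y : κ → ℕ → ℤ) (n₀ : ℕ) :
    ∃ (a : ℕ) (H : Finset ℕ), H.Nonempty ∧ (∀ t ∈ H, n₀ ≤ t) ∧
      ∀ i, (a : ℤ) + ∑ t ∈ H, y i t ∈ (Nat.cast '' D : Set ℤ) := by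
  obtain ⟨ι, _, h⟩ := hD.exists_add_sum_mem (Option κ)
  let e : ι ↪ ℕ :=
    (Fintype.equivFin ι).toEmbedding.trans (Fin.valEmbedding.trans (addLeftEmbedding n₀))
  obtain ⟨c, W, hW, hc⟩ := h fun x j => x.elim 0 fun i => y i (e j)
  obtain ⟨a, -, rfl⟩ : c ∈ (Nat.cast '' D : Set ℤ) := by simpa using hc none
  refine ⟨a, W.map e, hW.map, fun t ht => ?_, fun i => ?_⟩
  · obtain ⟨j, -, rfl⟩ := Finset.mem_map.1 ht
    simp [e]
  · simpa [Finset.sum_map] using hc (some i)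

section PartialSolution

variable {ι : Type*} (y : ι → ℕ → ℤ)

def blockSum (f : ℕ → ℕ × Finset ℕ) (i : ι) (F : Finset ℕ) : ℤ :=
  ∑ j ∈ F, (((f j).1 : ℤ) + ∑ t ∈ (f j).2, y i t)

variable {y} {f g : ℕ → ℕ × Finset ℕ} {i : ι} {F : Finset ℕ} {n : ℕ}

theorem blockSum_congr (h : ∀ j ∈ F, f j = g j) : blockSum y f i F = blockSum y g i F :=
  Finset.sum_congr rfl fun j hj => by rw [h j hj]

theorem blockSum_update_of_notMem (hn : n ∉ F) (b : ℕ × Finset ℕ) :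
    blockSum y (update f n b) i F = blockSum y f i F :=
  blockSum_congr fun _ hj => update_of_ne (ne_of_mem_of_not_mem hj hn) _ _

theorem blockSum_update_of_mem (hn : n ∈ F) (b : ℕ × Finset ℕ) :
    blockSum y (update f n b) i F =
      ((b.1 : ℤ) + ∑ t ∈ b.2, y i t) + blockSum y f i (F.erase n) := by
  rw [blockSum, ← Finset.add_sum_erase F _ hn, update_self]
  congr 1
  exact blockSum_update_of_notMem (Finset.notMem_erase n F) b

/-- `f j = (a_j, H_j)`; only the first `n` terms matter. -/
structure IsPartialSolution (y : ι → ℕ → ℤ) (B : Set ℕ) (n : ℕ) (f : ℕ → ℕ × Finset ℕ) :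
    Prop where
  nonempty : ∀ j < n, (f j).2.Nonempty
  lt : ∀ j, j + 1 < n → ∀ s ∈ (f j).2, ∀ t ∈ (f (j + 1)).2, s < t
  blockSum_mem :
    ∀ i, ∀ F ⊆ Finset.range n, F.Nonempty → blockSum y f i F ∈ (Nat.cast '' B : Set ℤ)

namespace IsPartialSolution

variable {B : Set ℕ}

theorem zero (y : ι → ℕ → ℤ) (B : Set ℕ) (f : ℕ → ℕ × Finset ℕ) : IsPartialSolution y B 0 f where
  nonempty := by simp
  lt := by simp
  blockSum_mem _ F hF hne := by simp_all

theorem congr (h : IsPartialSolution y B n f) (hfg : ∀ j < n, f j = g j) :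
    IsPartialSolution y B n g where
  nonempty j hj := hfg j hj ▸ h.nonempty j hj
  lt j hj := hfg j (by omega) ▸ hfg (j + 1) hj ▸ h.lt j hj
  blockSum_mem i F hF hne :=
    blockSum_congr (fun j hj => hfg j (Finset.mem_range.1 (hF hj))) ▸ h.blockSum_mem i F hF hne

theorem succ_update (h : IsPartialSolution y B n f) {D : Set ℕ} (hDB : D ⊆ B)
    (hD : ∀ s ∈ D, ∀ i, ∀ F ⊆ Finset.range n, ∀ x ∈ B, (x : ℤ) = blockSum y f i F → x + s ∈ B)
    {a : ℕ} {H : Finset ℕ} (hne : H.Nonempty) (hgt : ∀ t ∈ H, (f (n - 1)).2.sup id < t)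
    (hmem : ∀ i, (a : ℤ) + ∑ t ∈ H, y i t ∈ (Nat.cast '' D : Set ℤ)) :
    IsPartialSolution y B (n + 1) (update f n (a, H)) := by
  refine ⟨fun j hj => ?_, fun j hj s hs t ht => ?_, fun i F hF hFne => ?_⟩
  · rcases Nat.lt_succ_iff_lt_or_eq.1 hj with hj | rfl
    · rw [update_of_ne hj.ne]
      exact h.nonempty j hj
    · rwa [update_self]
  · rw [update_of_ne (by omega)] at hs
    rcases Nat.lt_succ_iff_lt_or_eq.1 hj with hj | rfl
    · rw [update_of_ne hj.ne] at ht
      exact h.lt j hj s hs t ht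
    · rw [update_self] at ht
      have hst : s ≤ (f j).2.sup id := Finset.le_sup (f := id) hs
      have hts := hgt t ht
      rw [Nat.add_sub_cancel] at hts
      omega
  · have hF' : F.erase n ⊆ Finset.range n := fun j hj => by
      have := Finset.mem_range.1 (hF (Finset.mem_of_mem_erase hj))
      have := Finset.ne_of_mem_erase hj
      simp only [Finset.mem_range]
      omega
    by_cases hn : n ∈ F
    · obtain ⟨z, hzD, hz⟩ := hmem i
      rw [blockSum_update_of_mem hn, ← hz]
      rcases (F.erase n).eq_empty_or_nonempty with he | he
      · rw [he, blockSum, Finset.sum_empty, add_zero]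
        exact ⟨z, hDB hzD, rfl⟩
      · obtain ⟨x, hxB, hx⟩ := h.blockSum_mem i _ hF' he
        refine ⟨x + z, hD z hzD i _ hF' x hxB hx, by push_cast; rw [hx, add_comm]⟩
    · rw [blockSum_update_of_notMem hn, ← Finset.erase_eq_of_notMem hn]
      exact h.blockSum_mem i _ hF' (by rwa [Finset.erase_eq_of_notMem hn])

theorem exists_update [Finite ι] {C : ℕ → Set ℕ} (hC : Antitone C)
    (hpws : ∀ m, NatPiecewiseSyndetic (C m)) (hshift : ∀ x ∈ C 0, ∃ m, C m ⊆ {s | x + s ∈ C 0})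
    (h : IsPartialSolution y (C 0) n f) :
    ∃ b, IsPartialSolution y (C 0) (n + 1) (update f n b) := by
  let T : Set ℕ := {x | x ∈ C 0 ∧ ∃ i, ∃ F ⊆ Finset.range n, (x : ℤ) = blockSum y f i F}
  have hT : T.Finite :=
    ((Set.finite_range fun p : ι × (Finset.range n).powerset => blockSum y f p.1 p.2).preimage
      Nat.cast_injective.injOn).subset
      fun x ⟨_, i, F, hF, hx⟩ => ⟨(i, ⟨F, Finset.mem_powerset.2 hF⟩), hx.symm⟩
  obtain ⟨m, hm⟩ := hC.exists_forall_add_mem_of_finite hshift hT fun _ hx => hx.1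
  obtain ⟨a, H, hne, hge, hmem⟩ := (hpws m).exists_nat_add_sum_mem y ((f (n - 1)).2.sup id + 1)
  exact ⟨(a, H), h.succ_update (hC (Nat.zero_le m))
    (fun s hs i F hF x hx hxF => hm s hs x ⟨hx, i, F, hF, hxF⟩) hne hge hmem⟩

end IsPartialSolution

end PartialSolution

theorem furstenberg_centralSetsTheorem (A : Set ℕ) (hA : NatCentral A)
    (k : ℕ) (y : Fin k → ℕ → ℤ) :
    ∃ (a : ℕ → ℕ) (H : ℕ → Finset ℕ),
      (∀ n, (H n).Nonempty) ∧
      (∀ n, ∀ s ∈ H n, ∀ t ∈ H (n + 1), s < t) ∧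
      (∀ i : Fin k, ∀ F : Finset ℕ, F.Nonempty →
        (∑ n ∈ F, ((a n : ℤ) + ∑ t ∈ H n, y i t)) ∈ (Nat.cast '' A : Set ℤ)) := by
  obtain ⟨C, hCA, hCsucc, hCpws, hCshift⟩ := hA
  obtain ⟨f, hf⟩ := exists_forall_of_exists_update (IsPartialSolution y (C 0))
    (fun _ _ _ hfg h => h.congr hfg) (fun _ => (0, ∅)) (IsPartialSolution.zero y (C 0) _)
    (fun _ _ h => h.exists_update (antitone_nat_of_succ_le hCsucc) hCpws (hCshift 0))
  refine ⟨fun n => (f n).1, fun n => (f n).2, fun n => (hf (n + 1)).nonempty n n.lt_succ_self,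
    fun n => (hf (n + 2)).lt n (by omega), fun i F hF => ?_⟩
  have hFr : F ⊆ Finset.range (F.sup id + 1) := fun j hj =>
    Finset.mem_range.2 (Nat.lt_succ_of_le (Finset.le_sup (f := id) hj))
  exact Set.image_mono (hCA 0) ((hf _).blockSum_mem i F hFr hF)
end

section
/- In any semigroup (S,·), every piecewise syndetic set is the intersection of a thick set and a syndetic set. -/
def Thick {S : Type*} [Semigroup S] (A : Set S) : Prop :=
  ∀ E : Finset S, E.Nonempty → ∃ x : S, ∀ e ∈ E, e * x ∈ A

def Syndetic {S : Type*} [Semigroup S] (A : Set S) : Prop :=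
  ∃ F : Finset S, F.Nonempty ∧ ∀ s : S, ∃ t ∈ F, t * s ∈ A

def PiecewiseSyndetic {S : Type*} [Semigroup S] (A : Set S) : Prop :=
  ∃ F : Finset S, F.Nonempty ∧ Thick {s : S | ∃ t ∈ F, t * s ∈ A}

/-- Every piecewise syndetic set is the intersection of a thick set and a syndetic set. -/
theorem piecewiseSyndetic_eq_thick_inter_syndetic {S : Type*} [Semigroup S]
    (A : Set S) (hA : PiecewiseSyndetic A) :
    ∃ T B : Set S, Thick T ∧ Syndetic B ∧ A = T ∩ B := by
  classical
  obtain ⟨F, hF, hT⟩ := hA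
  set W : Set S := {s | ∃ t ∈ F, t * s ∈ A} with hW
  obtain ⟨t₀, ht₀⟩ := hF
  refine ⟨A ∪ W, A ∪ Wᶜ, ?_, ?_, ?_⟩
  · intro E hE
    obtain ⟨x, hx⟩ := hT E hE
    exact ⟨x, fun e he => Or.inr (hx e he)⟩
  · refine ⟨insert t₀ (F.image (· * t₀)), Finset.insert_nonempty _ _, fun s => ?_⟩
    by_cases h : t₀ * s ∈ W
    · obtain ⟨u, hu, hus⟩ := h
      exact ⟨u * t₀, Finset.mem_insert_of_mem (Finset.mem_image_of_mem _ hu),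
        Or.inl (by rwa [mul_assoc])⟩
    · exact ⟨t₀, Finset.mem_insert_self _ _, Or.inr h⟩
  · ext s
    constructor
    · intro hs; exact ⟨Or.inl hs, Or.inl hs⟩
    · rintro ⟨hT', hB⟩
      rcases hT' with h | h
      · exact h
      · rcases hB with h' | h'
        · exact h'
        · exact absurd h h'
end

section
/- Strong Hales-Jewett lemma: let A be a finite nonempty alphabet and r ∈ ℕ. There exists m ∈ ℕ such that whenever the set of words of length m over A is r-colored, there is a variable word w(v) of length m that begins and ends with a constant letter (not v), contains at least one occurrence of v, and such that {w(a) : a ∈ A} is monochromatic, where w(a) denotes the word obtained by replacing every occurrence of v by a. -/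
/-- Strong Hales–Jewett lemma: for a finite nonempty alphabet `A` and `r` colors, there is
`m` such that every `r`-coloring of the length-`m` words over `A` admits a variable word
(`Option A`-valued, `none` playing the role of the variable `v`) which begins and ends with
a constant, contains the variable, and whose substitution instances are monochromatic. -/
theorem strong_halesJewett (A : Type*) [Fintype A] [Nonempty A] (r : ℕ) :
    ∃ m : ℕ, ∃ hm : 0 < m, ∀ χ : (Fin m → A) → Fin r,
      ∃ w : Fin m → Option A,
        (w ⟨0, hm⟩).isSome ∧
        (w ⟨m - 1, Nat.sub_lt hm Nat.one_pos⟩).isSome ∧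
        (∃ i : Fin m, w i = none) ∧
        ∃ c : Fin r, ∀ a : A, χ (fun i => (w i).getD a) = c := by
  obtain ⟨ι, _inst, hι⟩ := Combinatorics.Line.exists_mono_in_high_dimension A (Fin r)
  set n := Fintype.card ι with hn
  obtain ⟨e⟩ : Nonempty (ι ≃ Fin n) := ⟨Fintype.equivFin ι⟩
  obtain ⟨a₀⟩ := ‹Nonempty A›
  refine ⟨n + 2, Nat.succ_pos _, fun χ => ?_⟩
  set χ' : (ι → A) → Fin r := fun x =>
    χ (fun i => if h : 0 < i.val ∧ i.val < n + 1 then x (e.symm ⟨i.val - 1, by omega⟩) else a₀)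
    with hχ'
  obtain ⟨l, c, hc⟩ := hι χ'
  refine ⟨fun i => if h : 0 < i.val ∧ i.val < n + 1 then
      l.idxFun (e.symm ⟨i.val - 1, by omega⟩) else some a₀, ?_, ?_, ?_, c, ?_⟩
  · simp
  · simp
  · obtain ⟨j, hj⟩ := l.proper
    refine ⟨⟨(e j).val + 1, by have := (e j).isLt; omega⟩, ?_⟩
    have hcond : 0 < (e j).val + 1 ∧ (e j).val + 1 < n + 1 := ⟨Nat.succ_pos _, by
      have := (e j).isLt; omega⟩
    dsimp only
    rw [dif_pos hcond]
    simp only [Nat.add_sub_cancel, Fin.eta, Equiv.symm_apply_apply]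
    exact hj
  · intro a
    have := hc a
    rw [hχ'] at this
    convert this using 2
    funext i
    by_cases h : 0 < i.val ∧ i.val < n + 1
    · simp only [h, dif_pos]
      rfl
    · simp only [h, dif_neg, not_false_iff]
      rfl
end
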